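/- arXiv:2501.15861 — 3 statements merged into one kernel-verified Lean document; each statement's English description precedes it below -/
import Mathlib

section
/- Let G be a finite simple graph with n' vertices, e' edges, and average degree d' = 2e'/n' > 100. Then G contains at least (e')³/(10·(n')²) paths with 3 edges (i.e., sequences of 4 distinct vertices w,x,y,z with wx, xy, yz ∈ E(G)). -/
/-!
Repeatedly deleting all edges at a non-isolated vertex of degree at most `c = e'/(2n') = d'/4`
never decreases `#edges - c * #(non-isolated vertices)`, so it ends in a subgraph `H` with at
least `e'/2` edges in which every non-isolated vertex has degree `> c`. Each of the `2 e(H) ≥ e'`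
darts `(x, y)` of `H` extends to at least `(c - 1)(c - 2)` paths `w x y z`, and
`(c - 1)(c - 2) ≥ 2c²/5 = e'²/(10 n'²)` once `c ≥ 5`.
-/

open Finset

theorem Finset.card_mul_le_card_filter_ne_add {α : Type*} [DecidableEq α] (s t : Finset α) :
    #s * #t ≤ #{r ∈ s ×ˢ t | r.1 ≠ r.2} + #t := by
  have hdiag : #{r ∈ s ×ˢ t | ¬r.1 ≠ r.2} ≤ #t := by
    refine card_le_card_of_injOn Prod.snd (fun r hr => (mem_product.mp (mem_filter.mp hr).1).2) ?_
    intro a ha b hb hab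
    simp only [coe_filter, Set.mem_ofPred_eq, not_not] at ha hb
    exact Prod.ext (by rw [ha.2, hb.2, hab]) hab
  rw [← card_product, ← card_filter_add_card_filter_not (s := s ×ˢ t) (fun r : α × α => r.1 ≠ r.2)]
  omega

namespace SimpleGraph

variable {V : Type*} [Fintype V] [DecidableEq V]

theorem exists_le_lt_degree_of_mem_support (c : ℝ) (G : SimpleGraph V) [DecidableRel G.Adj] :
    ∃ (H : SimpleGraph V) (_ : DecidableRel H.Adj), H ≤ G ∧ (∀ v ∈ H.support, c < H.degree v) ∧
      #G.edgeFinset - c * Fintype.card G.support ≤ #H.edgeFinset - c * Fintype.card H.support := by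
  induction hm : #G.edgeFinset using Nat.strong_induction_on generalizing G with
  | _ m ih =>
  by_cases hmin : ∀ v ∈ G.support, c < G.degree v
  · exact ⟨G, inferInstance, le_rfl, hmin, by rw [hm]⟩
  push Not at hmin
  obtain ⟨x, hx, hdeg⟩ := hmin
  have hdeg_pos : 0 < G.degree x := G.degree_pos_iff_exists_adj x |>.mpr hx
  have hdeg_le : G.degree x ≤ #G.edgeFinset :=
    G.card_incidenceFinset_eq_degree x ▸ card_le_card (G.incidenceFinset_subset x)
  have hedges := G.card_edgeFinset_deleteIncidenceSet x
  have hsupport := G.card_support_deleteIncidenceSet hx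
  have hsupport_pos : 0 < Fintype.card G.support := Fintype.card_pos_iff.mpr ⟨⟨x, hx⟩⟩
  obtain ⟨H, _, hle, hHmin, hH⟩ := ih _ (by omega) (G.deleteIncidenceSet x) rfl
  refine ⟨H, inferInstance, hle.trans (G.deleteIncidenceSet_le x), hHmin, ?_⟩
  have hc : 1 ≤ c := le_trans (by exact_mod_cast hdeg_pos) hdeg
  rw [← hm]
  have hedges_real : (#(G.deleteIncidenceSet x).edgeFinset : ℝ) = #G.edgeFinset - G.degree x := by
    rw [hedges, Nat.cast_sub hdeg_le]
  have hsupport_real :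
      (Fintype.card (G.deleteIncidenceSet x).support : ℝ) + 1 ≤ Fintype.card G.support := by
    exact_mod_cast (by omega : _ + 1 ≤ Fintype.card G.support)
  nlinarith

def threeEdgePaths (G : SimpleGraph V) [DecidableRel G.Adj] : Finset (Fin 4 → V) :=
  {p | Function.Injective p ∧ G.Adj (p 0) (p 1) ∧ G.Adj (p 1) (p 2) ∧ G.Adj (p 2) (p 3)}

theorem threeEdgePaths_mono {G H : SimpleGraph V} [DecidableRel G.Adj] [DecidableRel H.Adj]
    (h : H ≤ G) : H.threeEdgePaths ⊆ G.threeEdgePaths := by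
  intro p
  simp only [threeEdgePaths, mem_filter, mem_univ, true_and]
  exact fun ⟨hp, h₁, h₂, h₃⟩ => ⟨hp, h h₁, h h₂, h h₃⟩

variable (G : SimpleGraph V) [DecidableRel G.Adj]

def dartExtensions (d : G.Dart) : Finset (V × V) :=
  {r ∈ (G.neighborFinset d.fst).erase d.snd ×ˢ (G.neighborFinset d.snd).erase d.fst | r.1 ≠ r.2}

theorem sum_card_dartExtensions_le_card_threeEdgePaths :
    ∑ d : G.Dart, #(G.dartExtensions d) ≤ #G.threeEdgePaths := by
  rw [← card_sigma]
  refine card_le_card_of_injOn (fun q => ![q.2.1, q.1.fst, q.1.snd, q.2.2]) ?_ ?_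
  · rintro ⟨d, w, z⟩ hq
    simp only [coe_sigma, Set.mem_sigma_iff, mem_coe, mem_univ, true_and, dartExtensions,
      mem_filter, mem_product, mem_erase, mem_neighborFinset] at hq
    obtain ⟨⟨⟨hwy, hxw⟩, hzx, hyz⟩, hwz⟩ := hq
    simp only [coe_filter, threeEdgePaths, mem_univ, true_and, Set.mem_ofPred_eq]
    refine ⟨?_, by simpa using hxw.symm, d.adj, by simpa using hyz⟩
    intro i j hij
    fin_cases i <;> fin_cases j <;> simp_all [hxw.ne, hyz.ne, d.adj.ne, hxw.ne', hyz.ne', d.adj.ne']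
  · rintro ⟨d, w, z⟩ - ⟨d', w', z'⟩ - h
    have h0 := congrFun h 0
    have h1 := congrFun h 1
    have h2 := congrFun h 2
    have h3 := congrFun h 3
    simp only [Matrix.cons_val_zero, Matrix.cons_val_one, Matrix.cons_val] at h0 h1 h2 h3
    obtain rfl : d = d' := Dart.ext _ _ (Prod.ext h1 h2)
    simp [h0, h3]

theorem le_card_dartExtensions {c : ℝ} (hc : 2 ≤ c) (hmin : ∀ v ∈ G.support, c < G.degree v)
    (d : G.Dart) : (c - 1) * (c - 2) ≤ #(G.dartExtensions d) := by
  have hdeg_erase {x y : V} (h : G.Adj x y) : c - 1 < #((G.neighborFinset x).erase y) := by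
    have hx : c < G.degree x := hmin x ⟨y, h⟩
    rw [card_erase_of_mem ((G.mem_neighborFinset x y).mpr h), card_neighborFinset_eq_degree,
      Nat.cast_sub ((G.degree_pos_iff_exists_adj x).mpr ⟨y, h⟩)]
    push_cast
    linarith
  set s := (G.neighborFinset d.fst).erase d.snd
  set t := (G.neighborFinset d.snd).erase d.fst
  have hs : c - 1 < #s := hdeg_erase d.adj
  have ht : c - 1 < #t := hdeg_erase d.adj.symm
  have hcount : (#s * #t : ℝ) ≤ #{r ∈ s ×ˢ t | r.1 ≠ r.2} + #t := by
    exact_mod_cast card_mul_le_card_filter_ne_add s t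
  rw [dartExtensions]
  nlinarith

theorem card_dart_mul_le_card_threeEdgePaths {c : ℝ} (hc : 2 ≤ c)
    (hmin : ∀ v ∈ G.support, c < G.degree v) :
    Fintype.card G.Dart * ((c - 1) * (c - 2)) ≤ #G.threeEdgePaths := by
  calc Fintype.card G.Dart * ((c - 1) * (c - 2))
      ≤ ∑ d : G.Dart, (#(G.dartExtensions d) : ℝ) := by
        rw [← nsmul_eq_mul, ← card_univ]
        exact card_nsmul_le_sum _ _ _ fun d _ => G.le_card_dartExtensions hc hmin d
    _ ≤ #G.threeEdgePaths := by exact_mod_cast G.sum_card_dartExtensions_le_card_threeEdgePaths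

end SimpleGraph

theorem stmt_11 {V : Type*} [Fintype V] [DecidableEq V]
    (G : SimpleGraph V) [DecidableRel G.Adj] (n' e' : ℕ)
    (hn : Fintype.card V = n') (he : G.edgeFinset.card = e')
    (hd : (2 * e' : ℝ) / (n' : ℝ) > 100) :
    ((Set.ncard {p : Fin 4 → V | Function.Injective p ∧
        G.Adj (p 0) (p 1) ∧ G.Adj (p 1) (p 2) ∧ G.Adj (p 2) (p 3)}) : ℝ)
      ≥ (e' : ℝ) ^ 3 / (10 * (n' : ℝ) ^ 2) := by
  have hn_pos : 0 < (n' : ℝ) := Nat.cast_pos.mpr (Nat.pos_of_ne_zero fun h => by norm_num [h] at hd)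
  set c : ℝ := e' / (2 * n') with hc_def
  have he_eq : (e' : ℝ) = 2 * c * n' := by rw [hc_def]; field_simp
  have hc : 25 < c := by
    have : c = 2 * e' / n' / 4 := by rw [hc_def]; field_simp; ring
    linarith
  obtain ⟨H, _, hHG, hmin, hcore⟩ := G.exists_le_lt_degree_of_mem_support c
  have hsupport : (Fintype.card G.support : ℝ) ≤ n' := by
    exact_mod_cast hn ▸ set_fintype_card_le_univ G.support
  have hH_edges : (e' : ℝ) ≤ 2 * #H.edgeFinset := by
    have : (0 : ℝ) ≤ Fintype.card H.support := Nat.cast_nonneg _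
    rw [he] at hcore
    nlinarith
  have hpaths := H.card_dart_mul_le_card_threeEdgePaths (by linarith) hmin
  rw [H.dart_card_eq_twice_card_edges] at hpaths
  have hmono : (#H.threeEdgePaths : ℝ) ≤ #G.threeEdgePaths := by
    exact_mod_cast card_le_card (SimpleGraph.threeEdgePaths_mono hHG)
  have hquad : (e' : ℝ) ^ 3 / (10 * (n' : ℝ) ^ 2) = e' * (2 / 5 * c ^ 2) := by
    rw [he_eq]; field_simp; ring
  rw [Set.ncard_eq_toFinset_card', Set.toFinset_ofPred, ge_iff_le, hquad]
  calc (e' : ℝ) * (2 / 5 * c ^ 2) ≤ e' * ((c - 1) * (c - 2)) :=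
        mul_le_mul_of_nonneg_left (by nlinarith) (Nat.cast_nonneg _)
    _ ≤ 2 * #H.edgeFinset * ((c - 1) * (c - 2)) :=
        mul_le_mul_of_nonneg_right hH_edges (by nlinarith)
    _ ≤ #H.threeEdgePaths := by exact_mod_cast hpaths
    _ ≤ #G.threeEdgePaths := hmono
end

section
/- Let H be a linear triple system on n vertices with m edges and average degree d = 3m/n. For each vertex v, let G_v be the graph on V(H)∖{v} with yz an edge iff there exist vertices w, x with uwx, xyz ∈ E(H) (for u = v). Then Σ_{v ∈ V(H)} e(G_v) = 4·Σ_{x ∈ V(H)} C(d(x), 2) ≥ 4n·C(d, 2), where d(x) is the degree of x in H and e(G_v) the number of edges of G_v. -/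
/-!
An edge `yz` of `G_v` comes from an ordered pair of edges `e ∋ v` and `f = xyz` meeting exactly
in `x`. By linearity `f` is the only edge through `y, z`, and then `e` is the only edge through
`v, x`, so distinct such pairs give distinct edges of `G_v`. Summing over `v` counts each ordered
pair of meeting edges `|e \ f| = 2` times, and the ordered pairs of edges meeting at `x` number
`2 C(d(x), 2)`. The inequality is Cauchy–Schwarz for the degree sequence, whose sum is `3m`.
-/

open Finset

section

variable {V ι : Type*} [DecidableEq V] {H : Finset (Finset V)}

theorem sum_card_filter_mem_eq_sum_card [Fintype V] (P : Finset ι) (g : ι → Finset V) :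
    ∑ v, #{q ∈ P | v ∈ g q} = ∑ q ∈ P, #(g q) := by
  simpa [bipartiteAbove, bipartiteBelow] using
    sum_card_bipartiteAbove_eq_sum_card_bipartiteBelow (s := univ) (t := P) (fun v q => v ∈ g q)

theorem card_offDiag_eq_two_mul_choose_two {α : Type*} [DecidableEq α] (s : Finset α) :
    #s.offDiag = 2 * (#s).choose 2 := by
  rw [← Sym2.card_image_offDiag, Sym2.two_mul_card_image_offDiag]

theorem card_sdiff_eq_two_of_card_inter_eq_one {e f : Finset V} (he : #e = 3)
    (hef : #(e ∩ f) = 1) : #(e \ f) = 2 := by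
  have := card_sdiff_add_card_inter e f
  omega

theorem eq_of_mem_inter_of_mem_inter
    (hlin : ∀ e ∈ H, ∀ f ∈ H, e ≠ f → #(e ∩ f) ≤ 1) {e f : Finset V} (he : e ∈ H) (hf : f ∈ H)
    {a b : V} (hab : a ≠ b) (ha : a ∈ e ∩ f) (hb : b ∈ e ∩ f) : e = f := by
  by_contra hne
  have := hlin e he f hf hne
  have := one_lt_card.2 ⟨a, ha, b, hb, hab⟩
  omega

-- `p = {y, z}` is an edge of `G_v` via `e = vwx` and `f = xyz`.
def linkEdgeSet (H : Finset (Finset V)) (v : V) : Set (Finset V) :=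
  {p | #p = 2 ∧ ∃ e ∈ H, ∃ f ∈ H, e ≠ f ∧ #(e ∩ f) = 1 ∧ p ⊆ f \ e ∧ v ∈ e \ f}

def meetingPairs (H : Finset (Finset V)) : Finset (Finset V × Finset V) :=
  {q ∈ H.offDiag | #(q.1 ∩ q.2) = 1}

theorem injOn_sdiff_meetingPairs (h3 : ∀ e ∈ H, #e = 3)
    (hlin : ∀ e ∈ H, ∀ f ∈ H, e ≠ f → #(e ∩ f) ≤ 1) (v : V) :
    Set.InjOn (fun q : Finset V × Finset V => q.2 \ q.1)
      (↑{q ∈ meetingPairs H | v ∈ q.1 \ q.2} : Set (Finset V × Finset V)) := by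
  rintro ⟨e, f⟩ hq ⟨e', f'⟩ hq' (hfe : f \ e = f' \ e')
  simp only [meetingPairs, coe_filter, mem_filter, mem_offDiag, mem_sdiff, Set.mem_ofPred_eq]
    at hq hq'
  obtain ⟨⟨⟨he, hf, hne⟩, hef⟩, hve, hvf⟩ := hq
  obtain ⟨⟨⟨he', hf', -⟩, -⟩, hve', -⟩ := hq'
  obtain ⟨a, b, hab, hab_eq⟩ := card_eq_two.1 <|
    card_sdiff_eq_two_of_card_inter_eq_one (h3 f hf) (by rwa [inter_comm])
  have hsub : f \ e ⊆ f ∩ f' := fun y hy =>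
    mem_inter.2 ⟨(mem_sdiff.1 hy).1, (mem_sdiff.1 (hfe ▸ hy)).1⟩
  obtain rfl : f = f' := eq_of_mem_inter_of_mem_inter hlin hf hf' hab
    (hsub (by simp [hab_eq])) (hsub (by simp [hab_eq]))
  obtain ⟨x, hx⟩ := card_eq_one.1 hef
  have hxe : x ∈ e ∩ f := by simp [hx]
  -- the common point of `e` and `f` is recovered as `f \ (f \ e)`
  have hxe' : x ∈ e' := by
    have : f ∩ e = f ∩ e' := by
      simpa only [sdiff_sdiff_right_self, inf_eq_inter] using congrArg (f \ ·) hfe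
    exact (mem_inter.1 (this ▸ mem_inter.2 ⟨(mem_inter.1 hxe).2, (mem_inter.1 hxe).1⟩)).2
  have hvx : v ≠ x := fun h => hvf (h ▸ (mem_inter.1 hxe).2)
  rw [eq_of_mem_inter_of_mem_inter hlin he he' hvx (mem_inter.2 ⟨hve, hve'⟩)
    (mem_inter.2 ⟨(mem_inter.1 hxe).1, hxe'⟩)]

theorem linkEdgeSet_eq_image (h3 : ∀ e ∈ H, #e = 3) (v : V) :
    linkEdgeSet H v = ({q ∈ meetingPairs H | v ∈ q.1 \ q.2}.image fun q => q.2 \ q.1 :) := by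
  ext p
  simp only [linkEdgeSet, meetingPairs, Set.mem_ofPred_eq, coe_image, coe_filter, Set.mem_image,
    mem_filter, mem_offDiag, Prod.exists]
  constructor
  · rintro ⟨hp, e, he, f, hf, hne, hef, hpfe, hv⟩
    have hfe : #(f \ e) = 2 :=
      card_sdiff_eq_two_of_card_inter_eq_one (h3 f hf) (by rwa [inter_comm])
    exact ⟨e, f, ⟨⟨⟨he, hf, hne⟩, hef⟩, hv⟩, (eq_of_subset_of_card_le hpfe (by omega)).symm⟩
  · rintro ⟨e, f, ⟨⟨⟨he, hf, hne⟩, hef⟩, hv⟩, rfl⟩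
    exact ⟨card_sdiff_eq_two_of_card_inter_eq_one (h3 f hf) (by rwa [inter_comm]),
      e, he, f, hf, hne, hef, subset_rfl, hv⟩

theorem ncard_linkEdgeSet (h3 : ∀ e ∈ H, #e = 3)
    (hlin : ∀ e ∈ H, ∀ f ∈ H, e ≠ f → #(e ∩ f) ≤ 1) (v : V) :
    (linkEdgeSet H v).ncard = #{q ∈ meetingPairs H | v ∈ q.1 \ q.2} := by
  rw [linkEdgeSet_eq_image h3, Set.ncard_coe_finset,
    card_image_of_injOn (injOn_sdiff_meetingPairs h3 hlin v)]

theorem card_meetingPairs [Fintype V] (hlin : ∀ e ∈ H, ∀ f ∈ H, e ≠ f → #(e ∩ f) ≤ 1) :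
    #(meetingPairs H) = ∑ x, 2 * (#{e ∈ H | x ∈ e}).choose 2 := by
  -- by linearity, two distinct edges meet in exactly one point or not at all
  have hcard : ∀ q ∈ H.offDiag, #(q.1 ∩ q.2) = if #(q.1 ∩ q.2) = 1 then 1 else 0 := by
    intro q hq
    have := hlin q.1 (mem_offDiag.1 hq).1 q.2 (mem_offDiag.1 hq).2.1 (mem_offDiag.1 hq).2.2
    split_ifs <;> omega
  have hfiber : ∀ x, {q ∈ H.offDiag | x ∈ q.1 ∩ q.2} = {e ∈ H | x ∈ e}.offDiag := by
    intro x; ext q; simp only [mem_filter, mem_offDiag, mem_inter]; tauto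
  calc #(meetingPairs H) = ∑ q ∈ H.offDiag, #(q.1 ∩ q.2) := by
        rw [meetingPairs, card_filter]; exact (sum_congr rfl hcard).symm
    _ = ∑ x, #{q ∈ H.offDiag | x ∈ q.1 ∩ q.2} := (sum_card_filter_mem_eq_sum_card _ _).symm
    _ = ∑ x, 2 * (#{e ∈ H | x ∈ e}).choose 2 := by
        simp only [hfiber, card_offDiag_eq_two_mul_choose_two]

theorem sum_ncard_linkEdgeSet [Fintype V] (h3 : ∀ e ∈ H, #e = 3)
    (hlin : ∀ e ∈ H, ∀ f ∈ H, e ≠ f → #(e ∩ f) ≤ 1) :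
    ∑ v, (linkEdgeSet H v).ncard = 4 * ∑ x, (#{e ∈ H | x ∈ e}).choose 2 := by
  have hsdiff : ∀ q ∈ meetingPairs H, #(q.1 \ q.2) = 2 := fun q hq =>
    card_sdiff_eq_two_of_card_inter_eq_one (h3 q.1 (mem_offDiag.1 (mem_filter.1 hq).1).1)
      (mem_filter.1 hq).2
  calc ∑ v, (linkEdgeSet H v).ncard = ∑ v, #{q ∈ meetingPairs H | v ∈ q.1 \ q.2} := by
        simp only [ncard_linkEdgeSet h3 hlin]
    _ = ∑ q ∈ meetingPairs H, #(q.1 \ q.2) := sum_card_filter_mem_eq_sum_card _ _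
    _ = 2 * #(meetingPairs H) := by rw [sum_congr rfl hsdiff, sum_const, smul_eq_mul, mul_comm]
    _ = 4 * ∑ x, (#{e ∈ H | x ∈ e}).choose 2 := by
        rw [card_meetingPairs hlin, ← mul_sum]; ring

theorem sum_card_filter_mem_eq_three_mul_card [Fintype V] (h3 : ∀ e ∈ H, #e = 3) :
    ∑ x, #{e ∈ H | x ∈ e} = 3 * #H := by
  rw [sum_card_filter_mem_eq_sum_card H fun e => e, sum_congr rfl h3, sum_const, smul_eq_mul,
    mul_comm]

theorem card_mul_choose_two_mean_le (s : Finset ι) (f : ι → ℝ) :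
    #s * ((∑ i ∈ s, f i) / #s * ((∑ i ∈ s, f i) / #s - 1) / 2) ≤ ∑ i ∈ s, f i * (f i - 1) / 2 := by
  rcases s.eq_empty_or_nonempty with rfl | hs
  · simp
  have hcard : (0 : ℝ) < #s := by exact_mod_cast hs.card_pos
  have hCS := sq_sum_le_card_mul_sum_sq (s := s) (f := f)
  have hsum : ∑ i ∈ s, f i * (f i - 1) / 2 = (∑ i ∈ s, f i ^ 2 - ∑ i ∈ s, f i) / 2 := by
    rw [← sum_sub_distrib, sum_div]; exact sum_congr rfl fun i _ => by ring
  rw [hsum]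
  field_simp
  nlinarith

end

theorem stmt_13_general {V : Type*} [Fintype V] [DecidableEq V]
    (H : Finset (Finset V)) (n m : ℕ) (hn : Fintype.card V = n) (hm : H.card = m)
    (h3 : ∀ e ∈ H, e.card = 3)
    (hlin : ∀ e ∈ H, ∀ f ∈ H, e ≠ f → (e ∩ f).card ≤ 1) :
    ((∑ v : V, Set.ncard {p : Finset V | p.card = 2 ∧
        ∃ e ∈ H, ∃ f ∈ H, e ≠ f ∧ (e ∩ f).card = 1 ∧ p ⊆ f \ e ∧ v ∈ e \ f} : ℕ) : ℝ)
      = 4 * ∑ x : V, (((H.filter (fun e => x ∈ e)).card.choose 2 : ℕ) : ℝ)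
    ∧ (4 * ∑ x : V, (((H.filter (fun e => x ∈ e)).card.choose 2 : ℕ) : ℝ))
        ≥ 4 * (n : ℝ) * ((3 * (m : ℝ) / (n : ℝ)) * ((3 * (m : ℝ) / (n : ℝ)) - 1) / 2) := by
  refine ⟨by exact_mod_cast sum_ncard_linkEdgeSet h3 hlin, ?_⟩
  have hdeg : ∑ x : V, (#{e ∈ H | x ∈ e} : ℝ) = 3 * m := by
    exact_mod_cast (sum_card_filter_mem_eq_three_mul_card h3).trans (congrArg _ hm)
  have hmean := card_mul_choose_two_mean_le univ fun x => (#{e ∈ H | x ∈ e} : ℝ)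
  rw [hdeg, card_univ, hn] at hmean
  simp only [Nat.cast_choose_two]
  linarith

theorem stmt_13 {V : Type*} [Fintype V] [DecidableEq V]
    (H : Finset (Finset V)) (n m : ℕ) (hn : Fintype.card V = n) (hm : H.card = m)
    (hn0 : 0 < n)
    (h3 : ∀ e ∈ H, e.card = 3)
    (hlin : ∀ e ∈ H, ∀ f ∈ H, e ≠ f → (e ∩ f).card ≤ 1) :
    ((∑ v : V, Set.ncard {p : Finset V | p.card = 2 ∧
        ∃ e ∈ H, ∃ f ∈ H, e ≠ f ∧ (e ∩ f).card = 1 ∧ p ⊆ f \ e ∧ v ∈ e \ f} : ℕ) : ℝ)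
      = 4 * ∑ x : V, (((H.filter (fun e => x ∈ e)).card.choose 2 : ℕ) : ℝ)
    ∧ (4 * ∑ x : V, (((H.filter (fun e => x ∈ e)).card.choose 2 : ℕ) : ℝ))
        ≥ 4 * (n : ℝ) * ((3 * (m : ℝ) / (n : ℝ)) * ((3 * (m : ℝ) / (n : ℝ)) - 1) / 2) :=
  stmt_13_general H n m hn hm h3 hlin
end

section
/- For α, β ∈ ℂ written as α = Σ_{k=1}^{3m} a_k·13^k with a_k ∈ {1,2} and β = Σ_{k=1}^{3m} b_k·13^k with b_k ∈ {i, 2i}, suppose for every k, (a_k, b_k) ≠ (2, i). Define δ = Σ_{k=1}^{3m} d_k·13^k with d_k = (a_k(1+i) + b_k(1−i))/2. Then each digit d_k lies in {1+i, 3(1+i)/2, 2+2i}, and the map (α, β) ↦ δ is injective on the set of such admissible pairs. -/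
/-!
Writing `b = i t` with `t` real, the digit `(a (1 + i) + b (1 - i)) / 2` equals
`(a + t) (1 + i) / 2`. Hence `δ = 13 (1 + i) / 2 · N`, where the natural number `N` has
base-`13` digits `a_k + t_k ∈ {2, 3, 4}`, so `δ` determines every `a_k + t_k` by uniqueness of
base-`13` expansions. Finally `a + t` determines `(a, t)` on `{(1, 1), (1, 2), (2, 2)}`; the
excluded pair `(2, 1)` is exactly the one that would collide with `(1, 2)`.
-/

theorem Nat.eq_of_sum_mul_pow_eq {b n : ℕ} (hb : 1 < b) {e e' : Fin n → ℕ}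
    (he : ∀ k, e k < b) (he' : ∀ k, e' k < b)
    (h : ∑ k, e k * b ^ (k : ℕ) = ∑ k, e' k * b ^ (k : ℕ)) : e = e' := by
  refine List.ofFn_injective (Nat.ofDigits_inj_of_len_eq hb (by simp) ?_ ?_ ?_)
  · simpa [List.mem_ofFn] using he
  · simpa [List.mem_ofFn] using he'
  · simpa [Nat.ofDigits_eq_sum_mapIdx, List.mapIdx_eq_ofFn, List.sum_ofFn] using h

theorem eq_of_sum_mul_mul_pow_eq {K : Type*} [Field K] [CharZero K] {b n : ℕ} (hb : 1 < b)
    {c : K} (hc : c ≠ 0) {e e' : Fin n → ℕ} (he : ∀ k, e k < b) (he' : ∀ k, e' k < b)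
    (h : ∑ k, c * e k * (b : K) ^ ((k : ℕ) + 1) = ∑ k, c * e' k * (b : K) ^ ((k : ℕ) + 1)) :
    e = e' := by
  have factor (f : Fin n → ℕ) :
      ∑ k, c * f k * (b : K) ^ ((k : ℕ) + 1)
        = c * b * ((∑ k, f k * b ^ (k : ℕ) : ℕ) : K) := by
    push_cast
    rw [Finset.mul_sum]
    exact Finset.sum_congr rfl fun k _ => by ring
  rw [factor, factor] at h
  have hcb : c * b ≠ 0 := mul_ne_zero hc (by exact_mod_cast (zero_lt_one.trans hb).ne')
  exact Nat.eq_of_sum_mul_pow_eq hb he he' (Nat.cast_injective (mul_left_cancel₀ hcb h))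

open Complex

noncomputable def harmonicDigit (a b : ℂ) : ℂ := (a * (1 + I) + b * (1 - I)) / 2

def IsAdmissibleDigitPair (a b : ℂ) : Prop :=
  (a = 1 ∨ a = 2) ∧ (b = I ∨ b = 2 * I) ∧ ¬(a = 2 ∧ b = I)

lemma IsAdmissibleDigitPair.cases {a b : ℂ} (h : IsAdmissibleDigitPair a b) :
    (a = 1 ∧ b = I) ∨ (a = 1 ∧ b = 2 * I) ∨ (a = 2 ∧ b = 2 * I) := by
  obtain ⟨ha | ha, hb | hb, hab⟩ := h <;> simp_all

lemma harmonicDigit_eq_mul_natCast {a b : ℂ} (h : IsAdmissibleDigitPair a b) :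
    ∃ n ∈ Finset.Icc (2 : ℕ) 4, harmonicDigit a b = (1 + I) / 2 * n := by
  rcases h.cases with ⟨rfl, rfl⟩ | ⟨rfl, rfl⟩ | ⟨rfl, rfl⟩
  · exact ⟨2, by decide, by simp only [harmonicDigit]; push_cast; ring_nf; rw [I_sq]; ring⟩
  · exact ⟨3, by decide, by simp only [harmonicDigit]; push_cast; ring_nf; rw [I_sq]; ring⟩
  · exact ⟨4, by decide, by simp only [harmonicDigit]; push_cast; ring_nf; rw [I_sq]; ring⟩

lemma harmonicDigit_mem {a b : ℂ} (h : IsAdmissibleDigitPair a b) :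
    harmonicDigit a b ∈ ({1 + I, 3 * (1 + I) / 2, 2 + 2 * I} : Set ℂ) := by
  obtain ⟨n, hn_mem, hn⟩ := harmonicDigit_eq_mul_natCast h
  rw [hn, Set.mem_insert_iff, Set.mem_insert_iff, Set.mem_singleton_iff]
  fin_cases hn_mem
  · left; push_cast; ring
  · right; left; push_cast; ring
  · right; right; push_cast; ring

lemma IsAdmissibleDigitPair.eq_of_harmonicDigit_eq {a b a' b' : ℂ} (h : IsAdmissibleDigitPair a b)
    (h' : IsAdmissibleDigitPair a' b') (hd : harmonicDigit a b = harmonicDigit a' b') :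
    a = a' ∧ b = b' := by
  rcases h.cases with ⟨rfl, rfl⟩ | ⟨rfl, rfl⟩ | ⟨rfl, rfl⟩ <;>
  rcases h'.cases with ⟨rfl, rfl⟩ | ⟨rfl, rfl⟩ | ⟨rfl, rfl⟩ <;>
  simp_all [harmonicDigit, Complex.ext_iff] <;> norm_num at hd

theorem stmt_17 (m : ℕ) (a a' b b' : Fin (3 * m) → ℂ)
    (ha : ∀ k, a k = 1 ∨ a k = 2) (hb : ∀ k, b k = I ∨ b k = 2 * I)
    (hab : ∀ k, ¬(a k = 2 ∧ b k = I))
    (ha' : ∀ k, a' k = 1 ∨ a' k = 2) (hb' : ∀ k, b' k = I ∨ b' k = 2 * I)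
    (hab' : ∀ k, ¬(a' k = 2 ∧ b' k = I)) :
    (∀ k, (a k * (1 + I) + b k * (1 - I)) / 2
        ∈ ({1 + I, 3 * (1 + I) / 2, 2 + 2 * I} : Set ℂ))
    ∧ (∑ k, ((a k * (1 + I) + b k * (1 - I)) / 2) * 13 ^ ((k : ℕ) + 1)
        = ∑ k, ((a' k * (1 + I) + b' k * (1 - I)) / 2) * 13 ^ ((k : ℕ) + 1)
        → a = a' ∧ b = b') := by
  have adm k : IsAdmissibleDigitPair (a k) (b k) := ⟨ha k, hb k, hab k⟩
  have adm' k : IsAdmissibleDigitPair (a' k) (b' k) := ⟨ha' k, hb' k, hab' k⟩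
  refine ⟨fun k => harmonicDigit_mem (adm k), fun hsum => ?_⟩
  choose e he_mem he using fun k => harmonicDigit_eq_mul_natCast (adm k)
  choose e' he_mem' he' using fun k => harmonicDigit_eq_mul_natCast (adm' k)
  change ∑ k, harmonicDigit (a k) (b k) * 13 ^ ((k : ℕ) + 1)
    = ∑ k, harmonicDigit (a' k) (b' k) * 13 ^ ((k : ℕ) + 1) at hsum
  simp only [he, he'] at hsum
  have hlt k : e k < 13 := (Finset.mem_Icc.1 (he_mem k)).2.trans_lt (by norm_num)
  have hlt' k : e' k < 13 := (Finset.mem_Icc.1 (he_mem' k)).2.trans_lt (by norm_num)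
  have hee : e = e' := eq_of_sum_mul_mul_pow_eq (b := 13) (c := (1 + I) / 2) (by norm_num)
    (by simp [Complex.ext_iff]) hlt hlt' (by exact_mod_cast hsum)
  have hdigit k : harmonicDigit (a k) (b k) = harmonicDigit (a' k) (b' k) := by
    rw [he, he', hee]
  exact ⟨funext fun k => ((adm k).eq_of_harmonicDigit_eq (adm' k) (hdigit k)).1,
    funext fun k => ((adm k).eq_of_harmonicDigit_eq (adm' k) (hdigit k)).2⟩
end
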